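/- Let X ⊂ P^M and Y ⊂ P^N be smooth projective varieties of dimensions n and m, and let E, F be Ulrich bundles on X and Y respectively. Then the external tensor product E ⊠ F(n) (i.e., pr_X^*E ⊗ pr_Y^*(F ⊗ O_Y(n))) is a Ulrich bundle on X × Y with respect to the polarization O_X(1) ⊠ O_Y(1). -/
import Mathlib


/-- An abstract theory of coherent sheaves on a complex projective variety `X ⊂ ℙ^N`
polarized by the very ample line bundle `O_X(1)`.  `Coh` is the type of isomorphism
classes of coherent sheaves on `X`, `twist E k = E(k) = E ⊗ O_X(k)`, and `h i E` is the
dimension of the sheaf cohomology group `H^i(X, E)`. -/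
structure CohTheory where
  /-- isomorphism classes of coherent sheaves on `X` -/
  Coh : Type
  /-- `twist E k = E ⊗ O_X(k)` -/
  twist : Coh → ℤ → Coh
  twist_zero : ∀ E, twist E 0 = E
  twist_twist : ∀ E a b, twist (twist E a) b = twist E (a + b)
  /-- `h i E = dim_ℂ H^i(X, E)` -/
  h : ℕ → Coh → ℕ

/-- `E` is a Ulrich sheaf on the `n`-dimensional polarized variety `X`:
`H^i(X, E(-p)) = 0` for all `i` and all `1 ≤ p ≤ n`. -/
def CohTheory.IsUlrich (T : CohTheory) (n : ℕ) (E : T.Coh) : Prop :=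
  ∀ (i : ℕ) (p : ℤ), 1 ≤ p → p ≤ (n : ℤ) → T.h i (T.twist E (-p)) = 0

/-!
STATEMENT 10. Let `X ⊂ ℙ^M`, `Y ⊂ ℙ^N` be smooth projective varieties of dimensions
`n`, `m`, and let `E`, `F` be Ulrich bundles on `X`, `Y`.  Then the external tensor
product `E ⊠ F(n)` is a Ulrich bundle on `X × Y` with respect to the polarization
`O_X(1) ⊠ O_Y(1)`.

`TX`, `TY`, `TXY` are the theories of coherent sheaves on `X`, `Y` and `X × Y`
(the latter polarized by `O_X(1) ⊠ O_Y(1)`); `box G G' = G ⊠ G'`, which is compatible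
with twists (`htw`) and satisfies the Künneth formula (`hkunneth`).
-/

theorem box_product_ulrich
    (n m : ℕ) (TX TY TXY : CohTheory)
    (box : TX.Coh → TY.Coh → TXY.Coh)
    (htw : ∀ (G : TX.Coh) (G' : TY.Coh) (k : ℤ),
      TXY.twist (box G G') k = box (TX.twist G k) (TY.twist G' k))
    -- Künneth formula on `X × Y`:
    (hkunneth : ∀ (i : ℕ) (G : TX.Coh) (G' : TY.Coh),
      TXY.h i (box G G') = ∑ p ∈ Finset.range (i + 1), TX.h p G * TY.h (i - p) G')
    (E : TX.Coh) (F : TY.Coh)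
    (hE : TX.IsUlrich n E) (hF : TY.IsUlrich m F) :
    TXY.IsUlrich (n + m) (box E (TY.twist F n)) := by
  intro i p hp1 hp2
  rw [htw, TY.twist_twist, hkunneth]
  apply Finset.sum_eq_zero
  intro q _
  by_cases hpn : p ≤ (n : ℤ)
  · rw [hE q p hp1 hpn, zero_mul]
  · push_neg at hpn
    have h1 : 1 ≤ -((n : ℤ) + -p) := by omega
    have h2 : -((n : ℤ) + -p) ≤ (m : ℤ) := by push_cast at hp2 ⊢; omega
    have := hF (i - q) (-((n : ℤ) + -p)) h1 h2
    rw [neg_neg] at this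
    rw [this, mul_zero]
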